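/- arXiv:1004.0347 — 10 statements merged into one kernel-verified Lean document; each statement's English description precedes it below -/
import Mathlib

section
/- Steiner's theorem on isogonal cevians: Let A, B, C be affinely independent points in the Euclidean plane, and let A₁ and A₂ be points strictly between B and C such that ∠ B A A₁ = ∠ C A A₂ (i.e., the cevians AA₁ and AA₂ are isogonal with respect to the angle at A). Then (dist A₁ B / dist A₁ C) · (dist A₂ B / dist A₂ C) = (dist A B / dist A C)². -/
/-!
The ratio lemma: for `X` strictly between `B` and `C`, the law of sines in the triangles `ABX`
and `ACX`, whose angles at `X` are supplementary, gives
`XB / XC = (AB / AC) · (sin ∠BAX / sin ∠CAX)`.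
Since `∠BAA₁ + ∠A₁AC = ∠BAC = ∠BAA₂ + ∠A₂AC`, isogonality swaps the two angles at `A`
between the cevians, so the sine factors of the two ratios cancel in the product.
-/

open EuclideanGeometry

variable {V P : Type*} [NormedAddCommGroup V] [InnerProductSpace ℝ V] [MetricSpace P]
  [NormedAddTorsor V P]

theorem EuclideanGeometry.dist_mul_dist_mul_sin_angle_eq_of_sbtw (a : P) {b c x : P}
    (hx : Sbtw ℝ b x c) :
    dist x b * (dist a c * Real.sin (∠ c a x)) = dist x c * (dist a b * Real.sin (∠ b a x)) := by
  have hb := law_sin x a b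
  have hc := law_sin x a c
  have hsupp : ∠ a x b + ∠ a x c = Real.pi :=
    angle_add_angle_eq_pi_of_angle_eq_pi a hx.angle₁₂₃_eq_pi
  have hsin : Real.sin (∠ b x a) = Real.sin (∠ c x a) := by
    rw [angle_comm b, angle_comm c, ← Real.sin_pi_sub, ← hsupp, add_sub_cancel_left]
  rw [angle_comm x a b, dist_comm b x] at hb
  rw [angle_comm x a c, dist_comm c x] at hc
  linear_combination dist x b * hc - dist x c * hb - dist x b * dist x c * hsin

theorem EuclideanGeometry.sin_angle_ne_zero_of_sbtw {a b c x : P}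
    (h : ¬Collinear ℝ ({a, b, c} : Set P)) (hx : Sbtw ℝ b x c) : Real.sin (∠ b a x) ≠ 0 := by
  refine sin_ne_zero_of_not_collinear fun hbax => h ?_
  have hbx : b ≠ x := hx.left_ne
  have ha : a ∈ line[ℝ, b, x] :=
    hbax.mem_affineSpan_of_mem_of_ne (by simp) (by simp) (by simp) hbx
  have hc : c ∈ line[ℝ, b, x] :=
    hx.wbtw.collinear.mem_affineSpan_of_mem_of_ne (by simp) (by simp) (by simp) hbx
  exact collinear_triple_of_mem_affineSpan_pair ha (left_mem_affineSpan_pair ℝ b x) hc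

/-- **Steiner's theorem on isogonal cevians.** If `A₁`, `A₂` lie strictly between `B` and `C`
and the cevians `AA₁`, `AA₂` are isogonal with respect to the angle at `A`
(`∠ B A A₁ = ∠ C A A₂`), then
`(A₁B / A₁C) * (A₂B / A₂C) = (AB / AC)²`. -/
theorem steiner_isogonal_cevians (A B C A₁ A₂ : EuclideanSpace ℝ (Fin 2))
    (hABC : AffineIndependent ℝ ![A, B, C])
    (hA₁ : Sbtw ℝ B A₁ C) (hA₂ : Sbtw ℝ B A₂ C)
    (hiso : ∠ B A A₁ = ∠ C A A₂) :
    (dist A₁ B / dist A₁ C) * (dist A₂ B / dist A₂ C) = (dist A B / dist A C) ^ 2 := by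
  have hncol := affineIndependent_iff_not_collinear_set.mp hABC
  have hACB : ¬Collinear ℝ ({A, C, B} : Set _) := by rwa [Set.pair_comm]
  have hα := sin_angle_ne_zero_of_sbtw hncol hA₁
  have hβ := sin_angle_ne_zero_of_sbtw hACB hA₁.symm
  have hswap : ∠ B A A₂ = ∠ C A A₁ := by
    linarith [angle_add_angle_eq_of_sbtw (p := A) hA₁, angle_add_angle_eq_of_sbtw (p := A) hA₂,
      angle_comm A₂ A C, angle_comm A₁ A C]
  have h₁ := dist_mul_dist_mul_sin_angle_eq_of_sbtw A hA₁
  have h₂ := dist_mul_dist_mul_sin_angle_eq_of_sbtw A hA₂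
  rw [hswap, ← hiso] at h₂
  rw [div_mul_div_comm, div_pow, div_eq_div_iff (mul_ne_zero (dist_ne_zero.2 hA₁.ne_right)
    (dist_ne_zero.2 hA₂.ne_right)) (pow_ne_zero 2 (dist_ne_zero.2 (ne₁₃_of_not_collinear hncol)))]
  refine mul_right_cancel₀ (mul_ne_zero hα hβ) ?_
  linear_combination congr($h₁ * $h₂)
end

section
/- In a triangle, the isogonal cevians of concurrent cevians are concurrent: Let A, B, C be affinely independent points in the Euclidean plane. Let A₁, A₂ be strictly between B and C, let B₁, B₂ be strictly between C and A, and let C₁, C₂ be strictly between A and B, and suppose ∠ B A A₁ = ∠ C A A₂, ∠ C B B₁ = ∠ A B B₂, and ∠ A C C₁ = ∠ B C C₂. If the lines AA₁, BB₁, CC₁ have a common point, then the lines AA₂, BB₂, CC₂ also have a common point. -/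
/-!
Write `A₁ = lineMap B C t₁`, `A₂ = lineMap B C t₂`, and similarly at `B` and `C`. Expressing the
sine and the cosine of the common angle `∠ B A A₁ = ∠ C A A₂` through areas and inner products
shows that isogonality at `A` amounts to `t₁ t₂ · AC² = (1 - t₁)(1 - t₂) · AB²` (Steiner's
theorem). Multiplying the three such relations, the side lengths cancel, so the Ceva product
`t u v / ((1 - t)(1 - u)(1 - v))` of the isogonal cevians is the inverse of that of the original
ones. Ceva's theorem and its converse finish the proof.
-/

open AffineMap Real InnerProductGeometry RealInnerProductSpace EuclideanGeometry

section Ceva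

variable {k V P : Type*} [AddCommGroup V] [AddTorsor V P]

theorem AffineIndependent.rotate_three [DivisionRing k] [Module k V] {A B C : P}
    (h : AffineIndependent k ![A, B, C]) : AffineIndependent k ![B, C, A] := by
  rw [affineIndependent_iff_not_collinear_set] at h ⊢
  rwa [Set.pair_comm C A, Set.insert_comm B A]

theorem mul_mul_eq_of_mem_line_lineMap [CommRing k] [NoZeroDivisors k] [Module k V]
    {A B C Q : P} (h : AffineIndependent k ![A, B, C]) {t u v : k}
    (hA : Q ∈ line[k, A, lineMap B C t]) (hB : Q ∈ line[k, B, lineMap C A u])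
    (hC : Q ∈ line[k, C, lineMap A B v]) :
    t * u * v = (1 - t) * (1 - u) * (1 - v) := by
  have := Affine.Triangle.prod_eq_prod_one_sub_of_mem_line_point_lineMap
    (t := ⟨![A, B, C], h⟩) (r := ![t, u, v]) (p' := Q) (by intro i; fin_cases i <;> assumption)
  simpa [Fin.prod_univ_three] using this

theorem exists_mem_line_lineMap_of_mul_eq_mul [Field k] [Module k V] (A B C : P) {t u v : k}
    (hS : t * u + (1 - u) ≠ 0) (hceva : t * u * v = (1 - t) * (1 - u) * (1 - v)) :
    ∃ Q, Q ∈ line[k, A, lineMap B C t] ∧ Q ∈ line[k, B, lineMap C A u] ∧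
      Q ∈ line[k, C, lineMap A B v] := by
  -- `Q` has barycentric coordinates proportional to `(t u, (1 - t)(1 - u), t (1 - u))`
  set S := t * u + (1 - u)
  refine ⟨lineMap A (lineMap B C t) ((1 - u) / S), lineMap_mem_affineSpan_pair _ _ _, ?_, ?_⟩
  · convert lineMap_mem_affineSpan_pair (t / S) B (lineMap C A u) using 1
    refine vsub_left_cancel (p := A) ?_
    simp only [lineMap_vsub, vsub_self, lineMap_apply_module]
    match_scalars
    · field_simp
      ring
    · field_simp
  · convert lineMap_mem_affineSpan_pair ((t * u + (1 - t) * (1 - u)) / S) C (lineMap A B v)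
      using 1
    refine vsub_left_cancel (p := A) ?_
    simp only [lineMap_vsub, vsub_self, lineMap_apply_module]
    match_scalars
    · field_simp
      linear_combination -hceva
    · field_simp
      ring

theorem mul_mul_eq_of_isogonal [CommRing k] [IsDomain k] {a b c t₁ t₂ u₁ u₂ v₁ v₂ : k}
    (habc : a * b * c ≠ 0) (h₁ : t₁ * u₁ * v₁ ≠ 0)
    (hA : t₁ * t₂ * b = (1 - t₁) * (1 - t₂) * c) (hB : u₁ * u₂ * c = (1 - u₁) * (1 - u₂) * a)
    (hC : v₁ * v₂ * a = (1 - v₁) * (1 - v₂) * b)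
    (hceva : t₁ * u₁ * v₁ = (1 - t₁) * (1 - u₁) * (1 - v₁)) :
    t₂ * u₂ * v₂ = (1 - t₂) * (1 - u₂) * (1 - v₂) := by
  refine mul_left_cancel₀ (mul_ne_zero h₁ habc) ?_
  calc t₁ * u₁ * v₁ * (a * b * c) * (t₂ * u₂ * v₂)
      = (t₁ * t₂ * b) * (u₁ * u₂ * c) * (v₁ * v₂ * a) := by ring
    _ = ((1 - t₁) * (1 - t₂) * c) * ((1 - u₁) * (1 - u₂) * a) * ((1 - v₁) * (1 - v₂) * b) := by
      rw [hA, hB, hC]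
    _ = (1 - t₁) * (1 - u₁) * (1 - v₁) * (a * b * c) * ((1 - t₂) * (1 - u₂) * (1 - v₂)) := by
      ring
    _ = t₁ * u₁ * v₁ * (a * b * c) * ((1 - t₂) * (1 - u₂) * (1 - v₂)) := by rw [hceva]

end Ceva

section Steiner

variable {V P : Type*} [NormedAddCommGroup V] [InnerProductSpace ℝ V]

theorem InnerProductGeometry.sin_angle_lineMap_mul_norm_mul_norm (x y : V) {t : ℝ}
    (ht : 0 ≤ t) :
    sin (angle x (lineMap x y t)) * (‖x‖ * ‖lineMap x y t‖) =
      t * (sin (angle x y) * (‖x‖ * ‖y‖)) := by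
  have hgram :
      ⟪x, x⟫ * ⟪lineMap x y t, lineMap x y t⟫ - ⟪x, lineMap x y t⟫ * ⟪x, lineMap x y t⟫ =
        t ^ 2 * (⟪x, x⟫ * ⟪y, y⟫ - ⟪x, y⟫ * ⟪x, y⟫) := by
    simp only [lineMap_apply_module, inner_add_left, inner_add_right, real_inner_smul_left,
      real_inner_smul_right, real_inner_comm x y]
    ring
  rw [sin_angle_mul_norm_mul_norm, sin_angle_mul_norm_mul_norm, hgram,
    Real.sqrt_mul (sq_nonneg t), Real.sqrt_sq ht]

theorem InnerProductGeometry.mul_mul_norm_sq_eq_of_angle_lineMap_eq {x y : V} {t s : ℝ}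
    (hxy : sin (angle x y) * (‖x‖ * ‖y‖) ≠ 0) (ht : 0 ≤ t) (hs : s ≤ 1)
    (h : angle x (lineMap x y t) = angle y (lineMap x y s)) :
    t * s * ‖y‖ ^ 2 = (1 - t) * (1 - s) * ‖x‖ ^ 2 := by
  have hsin₁ := sin_angle_lineMap_mul_norm_mul_norm x y ht
  have hsin₂ := sin_angle_lineMap_mul_norm_mul_norm y x (sub_nonneg.2 hs)
  rw [lineMap_apply_one_sub, angle_comm y x, mul_comm ‖y‖ ‖x‖, ← h] at hsin₂
  set w₁ := lineMap x y t
  set w₂ := lineMap x y s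
  set θ := angle x w₁
  have hcos₁ : cos θ * (‖x‖ * ‖w₁‖) = ⟪x, w₁⟫ := cos_angle_mul_norm_mul_norm x w₁
  have hcos₂ : cos θ * (‖y‖ * ‖w₂‖) = ⟪y, w₂⟫ := by rw [h]; exact cos_angle_mul_norm_mul_norm y w₂
  -- both sides times `sin (angle x y) * (‖x‖ * ‖y‖)` equal `sin θ cos θ ‖x‖ ‖w₁‖ ‖y‖ ‖w₂‖`
  have key : t * ⟪y, w₂⟫ = (1 - s) * ⟪x, w₁⟫ := by
    refine mul_right_cancel₀ hxy ?_
    linear_combination (-⟪y, w₂⟫) * hsin₁ - (sin θ * (‖x‖ * ‖w₁‖)) * hcos₂ +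
      (sin θ * (‖y‖ * ‖w₂‖)) * hcos₁ + ⟪x, w₁⟫ * hsin₂
  simp only [w₁, w₂, lineMap_apply_module, inner_add_right, real_inner_smul_right,
    real_inner_self_eq_norm_sq, real_inner_comm x y] at key
  linear_combination key

theorem EuclideanGeometry.mul_mul_dist_sq_eq_of_angle_lineMap_eq [MetricSpace P]
    [NormedAddTorsor V P] {A B C : P} (h : AffineIndependent ℝ ![A, B, C]) {t s : ℝ}
    (ht : 0 ≤ t) (hs : s ≤ 1) (hangle : ∠ B A (lineMap B C t) = ∠ C A (lineMap B C s)) :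
    t * s * dist A C ^ 2 = (1 - t) * (1 - s) * dist A B ^ 2 := by
  rw [affineIndependent_iff_not_collinear_set, Set.insert_comm] at h
  have hxy : sin (∠ B A C) * (‖B -ᵥ A‖ * ‖C -ᵥ A‖) ≠ 0 := by
    rw [← dist_eq_norm_vsub, ← dist_eq_norm_vsub]
    exact mul_ne_zero (sin_ne_zero_of_not_collinear h) (mul_ne_zero
      (dist_ne_zero.2 (ne₁₂_of_not_collinear h)) (dist_ne_zero.2 (ne₂₃_of_not_collinear h).symm))
  rw [EuclideanGeometry.angle, EuclideanGeometry.angle, lineMap_vsub, lineMap_vsub] at hangle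
  simpa only [dist_comm A, dist_eq_norm_vsub] using
    mul_mul_norm_sq_eq_of_angle_lineMap_eq hxy ht hs hangle

end Steiner

/-- **Isogonal cevians of concurrent cevians are concurrent.** If the cevians
`AA₁`, `BB₁`, `CC₁` of triangle `ABC` are concurrent and `AA₂`, `BB₂`, `CC₂` are their
respective isogonals (`∠ B A A₁ = ∠ C A A₂`, etc.), then `AA₂`, `BB₂`, `CC₂` are also
concurrent. -/
theorem isogonal_cevians_concurrent (A B C A₁ A₂ B₁ B₂ C₁ C₂ : EuclideanSpace ℝ (Fin 2))
    (hABC : AffineIndependent ℝ ![A, B, C])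
    (hA₁ : Sbtw ℝ B A₁ C) (hA₂ : Sbtw ℝ B A₂ C)
    (hB₁ : Sbtw ℝ C B₁ A) (hB₂ : Sbtw ℝ C B₂ A)
    (hC₁ : Sbtw ℝ A C₁ B) (hC₂ : Sbtw ℝ A C₂ B)
    (ha : ∠ B A A₁ = ∠ C A A₂) (hb : ∠ C B B₁ = ∠ A B B₂) (hc : ∠ A C C₁ = ∠ B C C₂)
    (hconc : ∃ P, P ∈ line[ℝ, A, A₁] ∧ P ∈ line[ℝ, B, B₁] ∧ P ∈ line[ℝ, C, C₁]) :
    ∃ Q, Q ∈ line[ℝ, A, A₂] ∧ Q ∈ line[ℝ, B, B₂] ∧ Q ∈ line[ℝ, C, C₂] := by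
  obtain ⟨t₁, ⟨ht₁, -⟩, rfl⟩ := hA₁.mem_image_Ioo
  obtain ⟨t₂, ⟨ht₂, ht₂'⟩, rfl⟩ := hA₂.mem_image_Ioo
  obtain ⟨u₁, ⟨hu₁, -⟩, rfl⟩ := hB₁.mem_image_Ioo
  obtain ⟨u₂, ⟨hu₂, hu₂'⟩, rfl⟩ := hB₂.mem_image_Ioo
  obtain ⟨v₁, ⟨hv₁, -⟩, rfl⟩ := hC₁.mem_image_Ioo
  obtain ⟨v₂, ⟨-, hv₂'⟩, rfl⟩ := hC₂.mem_image_Ioo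
  have hA := mul_mul_dist_sq_eq_of_angle_lineMap_eq hABC ht₁.le ht₂'.le ha
  have hB := mul_mul_dist_sq_eq_of_angle_lineMap_eq hABC.rotate_three hu₁.le hu₂'.le hb
  have hC := mul_mul_dist_sq_eq_of_angle_lineMap_eq hABC.rotate_three.rotate_three hv₁.le
    hv₂'.le hc
  rw [dist_comm B A] at hB
  rw [dist_comm C B, dist_comm C A] at hC
  obtain ⟨P, hPA, hPB, hPC⟩ := hconc
  have hdist : dist B C ^ 2 * dist A C ^ 2 * dist A B ^ 2 ≠ 0 := by
    have h := affineIndependent_iff_not_collinear_set.1 hABC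
    simp [ne₁₂_of_not_collinear h, ne₁₃_of_not_collinear h, ne₂₃_of_not_collinear h]
  refine exists_mem_line_lineMap_of_mul_eq_mul A B C (by nlinarith [mul_pos ht₂ hu₂]) ?_
  exact mul_mul_eq_of_isogonal hdist (by positivity) hA hB hC
    (mul_mul_eq_of_mem_line_lineMap hABC hPA hPB hPC)
end

section
/- Carnot's perpendicularity lemma: Let A, B, C be affinely independent points in the Euclidean plane, and let A₁ be a point on line BC, B₁ a point on line CA, and C₁ a point on line AB. Then there exists a point M such that the vector M − A₁ is orthogonal to C − B, M − B₁ is orthogonal to A − C, and M − C₁ is orthogonal to B − A, if and only if dist A₁ B ² − dist A₁ C ² + dist B₁ C ² − dist B₁ A ² + dist C₁ A ² − dist C₁ B ² = 0. -/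
/-!
Expanding the squared distances, the alternating sum equals
`2 (⟪A₁, C - B⟫ + ⟪B₁, A - C⟫ + ⟪C₁, B - A⟫)`. The three perpendicularity conditions are the
linear equations `⟪M, u⟫ = ⟪A₁, u⟫`, `⟪M, v⟫ = ⟪B₁, v⟫`, `⟪M, w⟫ = ⟪C₁, w⟫` for the side vectors
`u = C - B`, `v = A - C`, `w = B - A`, which sum to zero. Since `u` and `v` are linearly independent, the Gram matrix of `u, v` is
invertible, so the first two equations can always be solved, and the third then holds exactly
when the right-hand sides sum to zero.
-/

open RealInnerProductSpace

theorem exists_inner_eq_of_linearIndependent {𝕜 E ι : Type*} [RCLike 𝕜] [NormedAddCommGroup E]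
    [InnerProductSpace 𝕜 E] [Fintype ι] {v : ι → E} (hv : LinearIndependent 𝕜 v) (c : ι → 𝕜) :
    ∃ x : E, ∀ i, inner 𝕜 (v i) x = c i := by
  classical
  have hdet := Matrix.det_gram_ne_zero_iff_linearIndependent.2 hv
  obtain ⟨a, rfl⟩ := Matrix.mulVec_surjective_iff_isUnit.2
    ((Matrix.isUnit_iff_isUnit_det _).2 hdet.isUnit) c
  exact ⟨∑ j, a j • v j, fun i => by
    simp [inner_sum, inner_smul_right, Matrix.mulVec, dotProduct, Matrix.gram_apply, mul_comm]⟩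

theorem AffineIndependent.linearIndependent_sub_sub {V : Type*} [AddCommGroup V] [Module ℝ V]
    {A B C : V} (h : AffineIndependent ℝ ![A, B, C]) : LinearIndependent ℝ ![C - B, A - C] := by
  rw [affineIndependent_iff_linearIndependent_vsub ℝ _ (2 : Fin 3),
    ← linearIndependent_equiv (finSuccAboveEquiv (2 : Fin 3))] at h
  have hAB : LinearIndependent ℝ ![A - C, B - C] := by
    convert! h
    ext i
    fin_cases i <;> rfl
  rw [LinearIndependent.pair_iff] at hAB ⊢
  intro s t hst
  have := hAB t (-s) (by rw [← hst]; module)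
  exact ⟨by simpa using this.2, this.1⟩

section InnerProductSpace

variable {E : Type*} [NormedAddCommGroup E] [InnerProductSpace ℝ E]

theorem exists_inner_eq_iff_add_add_eq_zero {u v w : E} (huvw : u + v + w = 0)
    (huv : LinearIndependent ℝ ![u, v]) (a b c : ℝ) :
    (∃ x : E, ⟪x, u⟫ = a ∧ ⟪x, v⟫ = b ∧ ⟪x, w⟫ = c) ↔ a + b + c = 0 := by
  constructor
  · rintro ⟨x, rfl, rfl, rfl⟩
    rw [← inner_add_right, ← inner_add_right, huvw, inner_zero_right]
  · intro habc
    obtain ⟨x, hx⟩ := exists_inner_eq_of_linearIndependent huv ![a, b]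
    have hu : ⟪x, u⟫ = a := by simpa [real_inner_comm] using hx 0
    have hv : ⟪x, v⟫ = b := by simpa [real_inner_comm] using hx 1
    refine ⟨x, hu, hv, ?_⟩
    rw [eq_neg_of_add_eq_zero_right huvw, inner_neg_right, inner_add_right, hu, hv]
    linarith

theorem dist_sq_alternating_sum_eq_inner (A B C A₁ B₁ C₁ : E) :
    dist A₁ B ^ 2 - dist A₁ C ^ 2 + dist B₁ C ^ 2 - dist B₁ A ^ 2
        + dist C₁ A ^ 2 - dist C₁ B ^ 2
      = 2 * (⟪A₁, C - B⟫ + ⟪B₁, A - C⟫ + ⟪C₁, B - A⟫) := by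
  simp only [dist_eq_norm, norm_sub_sq_real, inner_sub_right]
  ring

end InnerProductSpace

theorem carnot_perpendicularity_general (A B C A₁ B₁ C₁ : EuclideanSpace ℝ (Fin 2))
    (hABC : AffineIndependent ℝ ![A, B, C]) :
    (∃ M : EuclideanSpace ℝ (Fin 2),
        ⟪M - A₁, C - B⟫ = 0 ∧ ⟪M - B₁, A - C⟫ = 0 ∧ ⟪M - C₁, B - A⟫ = 0) ↔
      dist A₁ B ^ 2 - dist A₁ C ^ 2 + dist B₁ C ^ 2 - dist B₁ A ^ 2
        + dist C₁ A ^ 2 - dist C₁ B ^ 2 = 0 := by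
  rw [dist_sq_alternating_sum_eq_inner, mul_eq_zero, or_iff_right two_ne_zero,
    ← exists_inner_eq_iff_add_add_eq_zero (w := B - A) (by abel) hABC.linearIndependent_sub_sub]
  simp only [inner_sub_left, sub_eq_zero]

/-- **Carnot's perpendicularity lemma.** For points `A₁` on line `BC`, `B₁` on line `CA`
and `C₁` on line `AB`, the perpendiculars to the respective sides through `A₁`, `B₁`, `C₁`
are concurrent if and only if
`A₁B² − A₁C² + B₁C² − B₁A² + C₁A² − C₁B² = 0`. -/
theorem carnot_perpendicularity (A B C A₁ B₁ C₁ : EuclideanSpace ℝ (Fin 2))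
    (hABC : AffineIndependent ℝ ![A, B, C])
    (hA₁ : A₁ ∈ line[ℝ, B, C]) (hB₁ : B₁ ∈ line[ℝ, C, A]) (hC₁ : C₁ ∈ line[ℝ, A, B]) :
    (∃ M : EuclideanSpace ℝ (Fin 2),
        ⟪M - A₁, C - B⟫ = 0 ∧ ⟪M - B₁, A - C⟫ = 0 ∧ ⟪M - C₁, B - A⟫ = 0) ↔
      dist A₁ B ^ 2 - dist A₁ C ^ 2 + dist B₁ C ^ 2 - dist B₁ A ^ 2
        + dist C₁ A ^ 2 - dist C₁ B ^ 2 = 0 :=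
  carnot_perpendicularity_general A B C A₁ B₁ C₁ hABC
end

section
/- The orthological triangles theorem: Let A, B, C be affinely independent points in the Euclidean plane and let A', B', C' be three points with B' ≠ C', C' ≠ A', A' ≠ B'. Suppose there exists a point M such that M − A is orthogonal to C' − B', M − B is orthogonal to A' − C', and M − C is orthogonal to B' − A' (the perpendiculars from A, B, C to the lines B'C', C'A', A'B' are concurrent). Then there exists a point M' such that M' − A' is orthogonal to C − B, M' − B' is orthogonal to A − C, and M' − C' is orthogonal to B − A (the perpendiculars from A', B', C' to the lines BC, CA, AB are concurrent). -/
/-!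
For any points `M`, `M'` the two "orthology sums"
`⟪M - A, C' - B'⟫ + ⟪M - B, A' - C'⟫ + ⟪M - C, B' - A'⟫` and
`⟪M' - A', C - B⟫ + ⟪M' - B', A - C⟫ + ⟪M' - C', B - A⟫` are opposite numbers: the terms in `M`
(resp. `M'`) cancel because the side vectors of a triangle sum to zero, and what remains is a
bilinear expression in the two triangles that changes sign when they are swapped. The hypothesis makes the first sum vanish.
Since `A - B` and `C - B` are linearly independent, some `M'` lies on the perpendiculars from `A'`
and `C'`; the second sum then vanishes, which puts `M'` on the third perpendicular as well.
-/

open RealInnerProductSpace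

theorem AffineIndependent.linearIndependent_vsub_pair {k V P : Type*} [Ring k] [AddCommGroup V]
    [Module k V] [AddTorsor V P] {p₁ p₂ p₃ : P} (h : AffineIndependent k ![p₁, p₂, p₃]) :
    LinearIndependent k ![p₁ -ᵥ p₂, p₃ -ᵥ p₂] := by
  rw [affineIndependent_iff_linearIndependent_vsub k _ (1 : Fin 3),
    ← linearIndependent_equiv (finSuccAboveEquiv (1 : Fin 3))] at h
  convert! h
  ext i
  fin_cases i <;> rfl

section InnerProductSpace

variable {E : Type*} [NormedAddCommGroup E] [InnerProductSpace ℝ E]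

theorem inner_sub_add_inner_sub_add_inner_sub_add_eq_zero (M M' A B C A' B' C' : E) :
    (⟪M - A, C' - B'⟫ + ⟪M - B, A' - C'⟫ + ⟪M - C, B' - A'⟫) +
      (⟪M' - A', C - B⟫ + ⟪M' - B', A - C⟫ + ⟪M' - C', B - A⟫) = 0 := by
  simp only [inner_sub_left, inner_sub_right]
  rw [real_inner_comm C A', real_inner_comm B A', real_inner_comm A B', real_inner_comm C B',
    real_inner_comm B C', real_inner_comm A C']
  ring

/-- Riesz representation, in the finite-dimensional span of `v`, of the linear form taking the
values `c` on the basis `v`. -/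
theorem LinearIndependent.exists_forall_inner_eq {ι : Type*} [Finite ι] {v : ι → E}
    (hv : LinearIndependent ℝ v) (c : ι → ℝ) : ∃ x : E, ∀ i, ⟪x, v i⟫ = c i := by
  set W := Submodule.span ℝ (Set.range v)
  let b : Module.Basis ι ℝ W := .span hv
  have := Module.Finite.of_basis b
  let x : W := (InnerProductSpace.toDual ℝ W).symm (LinearMap.toContinuousLinearMap (b.constr ℝ c))
  refine ⟨x, fun i => ?_⟩
  calc ⟪(x : E), v i⟫ = ⟪x, b i⟫ := by rw [Submodule.coe_inner, Module.Basis.span_apply]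
    _ = c i := by simp [x, InnerProductSpace.toDual_symm_apply]

end InnerProductSpace

theorem orthological_triangles_general (A B C A' B' C' : EuclideanSpace ℝ (Fin 2))
    (hABC : AffineIndependent ℝ ![A, B, C])
    (hM : ∃ M : EuclideanSpace ℝ (Fin 2),
        ⟪M - A, C' - B'⟫ = 0 ∧ ⟪M - B, A' - C'⟫ = 0 ∧ ⟪M - C, B' - A'⟫ = 0) :
    ∃ M' : EuclideanSpace ℝ (Fin 2),
        ⟪M' - A', C - B⟫ = 0 ∧ ⟪M' - B', A - C⟫ = 0 ∧ ⟪M' - C', B - A⟫ = 0 := by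
  obtain ⟨M, hMA, hMB, hMC⟩ := hM
  obtain ⟨M', hM'⟩ := hABC.linearIndependent_vsub_pair.exists_forall_inner_eq
    ![⟪C', A - B⟫, ⟪A', C - B⟫]
  have hA' : ⟪M' - A', C - B⟫ = 0 := by
    simpa [inner_sub_left, sub_eq_zero] using hM' 1
  have hC' : ⟪M' - C', B - A⟫ = 0 := by
    rw [← neg_sub A B, inner_neg_right, neg_eq_zero]
    simpa [inner_sub_left, sub_eq_zero] using hM' 0
  have hsum := inner_sub_add_inner_sub_add_inner_sub_add_eq_zero M M' A B C A' B' C'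
  exact ⟨M', hA', by linarith, hC'⟩

/-- **The orthological triangles theorem.** If the perpendiculars from `A`, `B`, `C` to the
lines `B'C'`, `C'A'`, `A'B'` are concurrent, then the perpendiculars from `A'`, `B'`, `C'`
to the lines `BC`, `CA`, `AB` are also concurrent. -/
theorem orthological_triangles (A B C A' B' C' : EuclideanSpace ℝ (Fin 2))
    (hABC : AffineIndependent ℝ ![A, B, C])
    (hBC' : B' ≠ C') (hCA' : C' ≠ A') (hAB' : A' ≠ B')
    (hM : ∃ M : EuclideanSpace ℝ (Fin 2),
        ⟪M - A, C' - B'⟫ = 0 ∧ ⟪M - B, A' - C'⟫ = 0 ∧ ⟪M - C, B' - A'⟫ = 0) :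
    ∃ M' : EuclideanSpace ℝ (Fin 2),
        ⟪M' - A', C - B⟫ = 0 ∧ ⟪M' - B', A - C⟫ = 0 ∧ ⟪M' - C', B - A⟫ = 0 :=
  orthological_triangles_general A B C A' B' C' hABC hM
end

section
/- A triangle and the pedal triangle of a point in its plane are orthological: Let A, B, C be affinely independent points in the Euclidean plane, let P be a point, and let A' be the orthogonal projection of P onto line BC, B' the orthogonal projection of P onto line CA, and C' the orthogonal projection of P onto line AB. Assume A', B', C' are affinely independent. Then there exists a point M such that M − A is orthogonal to C' − B', M − B is orthogonal to A' − C', and M − C is orthogonal to B' − A' (the perpendiculars from A, B, C to the sides B'C', C'A', A'B' of the pedal triangle are concurrent). -/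
open RealInnerProductSpace

/-!
Two triangles `ABC` and `A'B'C'` with `A'B'C'` nondegenerate are orthological exactly when
`⟪A, C' - B'⟫ + ⟪B, A' - C'⟫ + ⟪C, B' - A'⟫ = 0`: the perpendiculars from `A` and `B` meet because
the sides `B'C'` and `C'A'` are independent, and the third perpendicular passes through that
point iff the sum vanishes. The sum is antisymmetric in the two triangles, and for the pedal
triangle the perpendiculars from `A'`, `B'`, `C'` to `BC`, `CA`, `AB` all pass through `P`, so it
vanishes.
-/

theorem AffineIndependent.linearIndependent_vsub_fin3 {k V P : Type*} [Ring k] [AddCommGroup V]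
    [Module k V] [AddTorsor V P] {p₁ p₂ p₃ : P} (h : AffineIndependent k ![p₁, p₂, p₃]) :
    LinearIndependent k ![p₁ -ᵥ p₃, p₂ -ᵥ p₃] := by
  rw [affineIndependent_iff_linearIndependent_vsub k _ (2 : Fin 3),
    ← linearIndependent_equiv (finSuccAboveEquiv (2 : Fin 3))] at h
  convert h using 1
  ext i
  fin_cases i <;> rfl

section

variable {E : Type*} [NormedAddCommGroup E] [InnerProductSpace ℝ E]

theorem exists_forall_inner_eq_of_linearIndependent {ι : Type*} [Fintype ι] {v : ι → E}
    (hv : LinearIndependent ℝ v) (c : ι → ℝ) : ∃ x : E, ∀ i, ⟪x, v i⟫ = c i := by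
  -- On `span v` the map `x ↦ (⟪v i, x⟫)ᵢ` is injective between spaces of equal dimension.
  set K := Submodule.span ℝ (Set.range v)
  have : FiniteDimensional ℝ K := FiniteDimensional.span_of_finite ℝ (Set.finite_range v)
  let f : K →ₗ[ℝ] ι → ℝ := LinearMap.pi fun i => (innerₛₗ ℝ (v i)).comp K.subtype
  have hf : Function.Injective f := by
    rw [← LinearMap.ker_eq_bot, Submodule.eq_bot_iff]
    intro x hx
    have hK : K ≤ LinearMap.ker (innerₛₗ ℝ (x : E)) := by
      rw [Submodule.span_le]
      rintro _ ⟨i, rfl⟩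
      simpa [real_inner_comm, f] using congr_fun hx i
    simpa using hK x.2
  have hrank : Module.finrank ℝ K = Module.finrank ℝ (ι → ℝ) := by
    rw [finrank_span_eq_card hv, Module.finrank_fintype_fun_eq_card]
  obtain ⟨x, hx⟩ := (LinearMap.injective_iff_surjective_of_finrank_eq_finrank hrank).1 hf c
  refine ⟨x, fun i => ?_⟩
  rw [real_inner_comm]
  exact congr_fun hx i

def orthologySum (A B C A' B' C' : E) : ℝ :=
  ⟪A, C' - B'⟫ + ⟪B, A' - C'⟫ + ⟪C, B' - A'⟫

theorem orthologySum_swap (A B C A' B' C' : E) :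
    orthologySum A' B' C' A B C = -orthologySum A B C A' B' C' := by
  simp only [orthologySum, inner_sub_right, real_inner_comm A, real_inner_comm B,
    real_inner_comm C]
  ring

theorem orthologySum_eq_zero_of_inner_sub_eq_zero {A B C A' B' C' : E} (P : E)
    (hA : ⟪P - A, C' - B'⟫ = 0) (hB : ⟪P - B, A' - C'⟫ = 0) (hC : ⟪P - C, B' - A'⟫ = 0) :
    orthologySum A B C A' B' C' = 0 := by
  have hP : ⟪P, C' - B'⟫ + ⟪P, A' - C'⟫ + ⟪P, B' - A'⟫ = 0 := by
    simp only [inner_sub_right]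
    ring
  simp only [inner_sub_left] at hA hB hC
  unfold orthologySum
  linarith

theorem exists_inner_sub_eq_zero_of_orthologySum_eq_zero {A B C A' B' C' : E}
    (h : AffineIndependent ℝ ![A', B', C']) (hS : orthologySum A B C A' B' C' = 0) :
    ∃ M : E, ⟪M - A, C' - B'⟫ = 0 ∧ ⟪M - B, A' - C'⟫ = 0 ∧ ⟪M - C, B' - A'⟫ = 0 := by
  obtain ⟨M, hM⟩ := exists_forall_inner_eq_of_linearIndependent h.linearIndependent_vsub_fin3
    ![⟪B, A' - C'⟫, ⟪A, B' - C'⟫]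
  have hMA : ⟪M, A' - C'⟫ = ⟪B, A' - C'⟫ := by simpa using hM 0
  have hMB : ⟪M, B' - C'⟫ = ⟪A, B' - C'⟫ := by simpa using hM 1
  simp only [orthologySum, inner_sub_right] at hS hMA hMB
  refine ⟨M, ?_, ?_, ?_⟩ <;> simp only [inner_sub_left, inner_sub_right] <;> linarith

end

theorem pedal_triangle_orthological_general (A B C P A' B' C' : EuclideanSpace ℝ (Fin 2))
    (hA'perp : ⟪P - A', C - B⟫ = 0)
    (hB'perp : ⟪P - B', A - C⟫ = 0)
    (hC'perp : ⟪P - C', B - A⟫ = 0)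
    (hped : AffineIndependent ℝ ![A', B', C']) :
    ∃ M : EuclideanSpace ℝ (Fin 2),
        ⟪M - A, C' - B'⟫ = 0 ∧ ⟪M - B, A' - C'⟫ = 0 ∧ ⟪M - C, B' - A'⟫ = 0 := by
  refine exists_inner_sub_eq_zero_of_orthologySum_eq_zero hped ?_
  rw [← neg_eq_zero, ← orthologySum_swap]
  exact orthologySum_eq_zero_of_inner_sub_eq_zero P hA'perp hB'perp hC'perp

/-- **A triangle and the pedal triangle of a point are orthological.** If `A'`, `B'`, `C'`
are the orthogonal projections of a point `P` onto the lines `BC`, `CA`, `AB` and they are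
affinely independent, then the perpendiculars from `A`, `B`, `C` to the sides `B'C'`,
`C'A'`, `A'B'` of the pedal triangle are concurrent. -/
theorem pedal_triangle_orthological (A B C P A' B' C' : EuclideanSpace ℝ (Fin 2))
    (hABC : AffineIndependent ℝ ![A, B, C])
    (hA' : A' ∈ line[ℝ, B, C]) (hA'perp : ⟪P - A', C - B⟫ = 0)
    (hB' : B' ∈ line[ℝ, C, A]) (hB'perp : ⟪P - B', A - C⟫ = 0)
    (hC' : C' ∈ line[ℝ, A, B]) (hC'perp : ⟪P - C', B - A⟫ = 0)
    (hped : AffineIndependent ℝ ![A', B', C']) :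
    ∃ M : EuclideanSpace ℝ (Fin 2),
        ⟪M - A, C' - B'⟫ = 0 ∧ ⟪M - B, A' - C'⟫ = 0 ∧ ⟪M - C, B' - A'⟫ = 0 :=
  pedal_triangle_orthological_general A B C P A' B' C' hA'perp hB'perp hC'perp hped
end

section
/- The six-point circle of two isogonal conjugate points: Let A, B, C be affinely independent points in the Euclidean plane and let P₁, P₂ be points in the interior of triangle ABC such that ∠ B A P₁ = ∠ C A P₂, ∠ C B P₁ = ∠ A B P₂, and ∠ A C P₁ = ∠ B C P₂ (P₁ and P₂ are isogonal conjugates). For i = 1, 2 let Aᵢ, Bᵢ, Cᵢ be the orthogonal projections of Pᵢ onto the lines BC, CA, AB respectively, and let P be the midpoint of the segment P₁P₂. Then dist P A₁ = dist P A₂ = dist P B₁ = dist P B₂ = dist P C₁ = dist P C₂; in particular the six points A₁, A₂, B₁, B₂, C₁, C₂ lie on a common circle centered at P. -/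
/-!
If `X₁`, `X₂` are the feet of `P₁`, `P₂` on a line through a point `Q`, the foot of the midpoint
`M` of `P₁P₂` is the midpoint of `X₁X₂`; hence `MX₁ = MX₂` and `MX₁² = MQ² - QX₁·QX₂` with signed
lengths. So the six feet are equidistant from `M` once `AC₁·AC₂ = AB₁·AB₂` at the vertex `A`, and
likewise at `C`. In barycentric coordinates `P_i = α_i A + β_i B + γ_i C`, comparing sines (areas)
and cosines of the equal angles `∠BAP₁ = ∠CAP₂` gives `β₁β₂·AB² = γ₁γ₂·AC²`, and this is exactly
the identity `AC₁·AC₂ = AB₁·AB₂`.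
-/

open EuclideanGeometry RealInnerProductSpace

namespace SixPointCircle

open Real
open InnerProductGeometry (cos_angle_mul_norm_mul_norm sin_angle_mul_norm_mul_norm)

variable {V : Type*} [NormedAddCommGroup V] [InnerProductSpace ℝ V]

theorem sin_angle_smul_add_smul_mul_norm_mul_norm (u v : V) (β γ : ℝ) :
    sin (InnerProductGeometry.angle u (β • u + γ • v)) * (‖u‖ * ‖β • u + γ • v‖) =
      |γ| * (sin (InnerProductGeometry.angle u v) * (‖u‖ * ‖v‖)) := by
  have hgram : ⟪u, u⟫ * ⟪β • u + γ • v, β • u + γ • v⟫ -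
      ⟪u, β • u + γ • v⟫ * ⟪u, β • u + γ • v⟫ =
        γ ^ 2 * (⟪u, u⟫ * ⟪v, v⟫ - ⟪u, v⟫ * ⟪u, v⟫) := by
    simp only [inner_add_left, inner_add_right, real_inner_smul_left, real_inner_smul_right,
      real_inner_comm u v]
    ring
  rw [sin_angle_mul_norm_mul_norm, sin_angle_mul_norm_mul_norm, hgram,
    sqrt_mul (sq_nonneg γ), sqrt_sq_eq_abs]

theorem mul_mul_norm_sq_eq_of_angle_eq {u v : V} {β₁ γ₁ β₂ γ₂ : ℝ}
    (huv : sin (InnerProductGeometry.angle u v) * (‖u‖ * ‖v‖) ≠ 0) (hγ₁ : 0 < γ₁) (hβ₂ : 0 < β₂)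
    (h : InnerProductGeometry.angle u (β₁ • u + γ₁ • v) =
      InnerProductGeometry.angle v (β₂ • u + γ₂ • v)) :
    β₁ * β₂ * ‖u‖ ^ 2 = γ₁ * γ₂ * ‖v‖ ^ 2 := by
  set w₁ := β₁ • u + γ₁ • v
  set w₂ := β₂ • u + γ₂ • v
  -- the triangles spanned by `u, w₁` and by `v, w₂` have `γ₁` and `β₂` times the area of `u, v`
  have hsin₂ := sin_angle_smul_add_smul_mul_norm_mul_norm v u γ₂ β₂
  rw [add_comm, abs_of_pos hβ₂, InnerProductGeometry.angle_comm v u, mul_comm ‖v‖ ‖u‖] at hsin₂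
  set θ := InnerProductGeometry.angle v w₂
  have hsin₁ : sin θ * (‖u‖ * ‖w₁‖) =
      γ₁ * (sin (InnerProductGeometry.angle u v) * (‖u‖ * ‖v‖)) := by
    rw [← h, sin_angle_smul_add_smul_mul_norm_mul_norm, abs_of_pos hγ₁]
  have hθ : sin θ ≠ 0 := by
    rintro h0
    rw [h0, zero_mul] at hsin₁
    exact huv ((mul_eq_zero.1 hsin₁.symm).resolve_left hγ₁.ne')
  have hnorms : β₂ * (‖u‖ * ‖w₁‖) = γ₁ * (‖v‖ * ‖w₂‖) :=
    mul_left_cancel₀ hθ (by linear_combination β₂ * hsin₁ - γ₁ * hsin₂)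
  have hcos₁ : cos θ * (‖u‖ * ‖w₁‖) = ⟪u, w₁⟫ := h ▸ cos_angle_mul_norm_mul_norm u w₁
  have hcos₂ : cos θ * (‖v‖ * ‖w₂‖) = ⟪v, w₂⟫ := cos_angle_mul_norm_mul_norm v w₂
  have hinner : β₂ * ⟪u, w₁⟫ = γ₁ * ⟪v, w₂⟫ := by
    linear_combination -β₂ * hcos₁ + γ₁ * hcos₂ + cos θ * hnorms
  simp only [w₁, w₂, inner_add_right, real_inner_smul_right, real_inner_self_eq_norm_sq,
    real_inner_comm u v] at hinner
  linear_combination hinner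

theorem inner_mul_inner_div_norm_sq_eq_of_mul_mul_norm_sq_eq {u v : V} {β₁ γ₁ β₂ γ₂ : ℝ}
    (hu : u ≠ 0) (hv : v ≠ 0) (h : β₁ * β₂ * ‖u‖ ^ 2 = γ₁ * γ₂ * ‖v‖ ^ 2) :
    ⟪β₁ • u + γ₁ • v, u⟫ * ⟪β₂ • u + γ₂ • v, u⟫ / ‖u‖ ^ 2 =
      ⟪β₁ • u + γ₁ • v, v⟫ * ⟪β₂ • u + γ₂ • v, v⟫ / ‖v‖ ^ 2 := by
  rw [div_eq_div_iff (by positivity) (by positivity)]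
  simp only [inner_add_left, real_inner_smul_left, real_inner_self_eq_norm_sq,
    real_inner_comm u v]
  linear_combination (‖u‖ ^ 2 * ‖v‖ ^ 2 - ⟪u, v⟫ ^ 2) * h

theorem inner_mul_inner_div_norm_sq_eq_of_angle_eq {A B C P₁ P₂ : V} {α₁ β₁ γ₁ α₂ β₂ γ₂ : ℝ}
    (hABC : ¬Collinear ℝ ({B, A, C} : Set V))
    (hs₁ : α₁ + β₁ + γ₁ = 1) (hP₁ : α₁ • A + β₁ • B + γ₁ • C = P₁)
    (hs₂ : α₂ + β₂ + γ₂ = 1) (hP₂ : α₂ • A + β₂ • B + γ₂ • C = P₂)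
    (hγ₁ : 0 < γ₁) (hβ₂ : 0 < β₂) (h : ∠ B A P₁ = ∠ C A P₂) :
    ⟪P₁ - A, B - A⟫ * ⟪P₂ - A, B - A⟫ / ‖B - A‖ ^ 2 =
      ⟪P₁ - A, C - A⟫ * ⟪P₂ - A, C - A⟫ / ‖C - A‖ ^ 2 := by
  have hw₁ : P₁ - A = β₁ • (B - A) + γ₁ • (C - A) := by
    rw [← hP₁, show α₁ = 1 - β₁ - γ₁ by linarith]; module
  have hw₂ : P₂ - A = β₂ • (B - A) + γ₂ • (C - A) := by
    rw [← hP₂, show α₂ = 1 - β₂ - γ₂ by linarith]; module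
  have hBA : B - A ≠ 0 := sub_ne_zero.2 (ne₁₂_of_not_collinear hABC)
  have hCA : C - A ≠ 0 := sub_ne_zero.2 (ne₂₃_of_not_collinear hABC).symm
  have hsin : sin (∠ B A C) * (‖B - A‖ * ‖C - A‖) ≠ 0 :=
    mul_ne_zero (sin_ne_zero_of_not_collinear hABC) (by positivity)
  rw [hw₁, hw₂]
  refine inner_mul_inner_div_norm_sq_eq_of_mul_mul_norm_sq_eq hBA hCA
    (mul_mul_norm_sq_eq_of_angle_eq hsin hγ₁ hβ₂ ?_)
  simpa only [EuclideanGeometry.angle, vsub_eq_sub, hw₁, hw₂] using h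

-- The subtracted term is the signed product `QX₁·QX₂`, where `X₂` is the foot of `P₂` on `QR`.
theorem dist_sq_eq_of_mem_line_of_inner_eq_zero_left {P₁ P₂ M Q R X : V}
    (hM : M = midpoint ℝ P₁ P₂) (hX : X ∈ line[ℝ, Q, R]) (hperp : ⟪P₁ - X, R - Q⟫ = 0) :
    dist M X ^ 2 = dist M Q ^ 2 - ⟪P₁ - Q, R - Q⟫ * ⟪P₂ - Q, R - Q⟫ / ‖R - Q‖ ^ 2 := by
  obtain ⟨t, rfl⟩ := mem_affineSpan_pair_iff_exists_lineMap_eq.1 hX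
  rw [AffineMap.lineMap_apply_module'] at hperp ⊢
  set u := R - Q
  have hM' : M - Q = (2⁻¹ : ℝ) • ((P₁ - Q) + (P₂ - Q)) := by
    rw [hM, midpoint_eq_smul_add, invOf_eq_inv]; module
  have ha₁ : ⟪P₁ - Q, u⟫ = t * ‖u‖ ^ 2 := by
    rw [show P₁ - Q = (P₁ - (t • u + Q)) + t • u by abel, inner_add_left, hperp,
      real_inner_smul_left, real_inner_self_eq_norm_sq, zero_add]
  rcases eq_or_ne u 0 with hu | hu
  · simp [hu]
  rw [dist_eq_norm, dist_eq_norm, show M - (t • u + Q) = (M - Q) - t • u by abel,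
    norm_sub_sq_real, norm_smul t u, mul_pow, Real.norm_eq_abs, sq_abs, real_inner_smul_right,
    hM', real_inner_smul_left, inner_add_left, ha₁]
  field_simp
  ring

theorem dist_sq_eq_of_mem_line_of_inner_eq_zero_right {P₁ P₂ M Q R X : V}
    (hM : M = midpoint ℝ P₁ P₂) (hX : X ∈ line[ℝ, Q, R]) (hperp : ⟪P₁ - X, R - Q⟫ = 0) :
    dist M X ^ 2 = dist M R ^ 2 - ⟪P₁ - R, Q - R⟫ * ⟪P₂ - R, Q - R⟫ / ‖Q - R‖ ^ 2 := by
  refine dist_sq_eq_of_mem_line_of_inner_eq_zero_left hM (by rwa [Set.pair_comm]) ?_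
  rw [← neg_sub R Q, inner_neg_right, hperp, neg_zero]

end SixPointCircle

open SixPointCircle

theorem six_point_circle_general (A B C P₁ P₂ A₁ B₁ C₁ A₂ B₂ C₂ : EuclideanSpace ℝ (Fin 2))
    (hABC : AffineIndependent ℝ ![A, B, C])
    (hP₁ : ∃ α β γ : ℝ, 0 < α ∧ 0 < β ∧ 0 < γ ∧ α + β + γ = 1 ∧ α • A + β • B + γ • C = P₁)
    (hP₂ : ∃ α β γ : ℝ, 0 < α ∧ 0 < β ∧ 0 < γ ∧ α + β + γ = 1 ∧ α • A + β • B + γ • C = P₂)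
    (hisoA : ∠ B A P₁ = ∠ C A P₂) (hisoC : ∠ A C P₁ = ∠ B C P₂)
    (hA₁ : A₁ ∈ line[ℝ, B, C]) (hA₁perp : ⟪P₁ - A₁, C - B⟫ = 0)
    (hB₁ : B₁ ∈ line[ℝ, C, A]) (hB₁perp : ⟪P₁ - B₁, A - C⟫ = 0)
    (hC₁ : C₁ ∈ line[ℝ, A, B]) (hC₁perp : ⟪P₁ - C₁, B - A⟫ = 0)
    (hA₂ : A₂ ∈ line[ℝ, B, C]) (hA₂perp : ⟪P₂ - A₂, C - B⟫ = 0)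
    (hB₂ : B₂ ∈ line[ℝ, C, A]) (hB₂perp : ⟪P₂ - B₂, A - C⟫ = 0)
    (hC₂ : C₂ ∈ line[ℝ, A, B]) (hC₂perp : ⟪P₂ - C₂, B - A⟫ = 0)
    (P : EuclideanSpace ℝ (Fin 2)) (hP : P = midpoint ℝ P₁ P₂) :
    dist P A₁ = dist P A₂ ∧ dist P A₂ = dist P B₁ ∧ dist P B₁ = dist P B₂ ∧
      dist P B₂ = dist P C₁ ∧ dist P C₁ = dist P C₂ := by
  obtain ⟨α₁, β₁, γ₁, -, hβ₁, hγ₁, hs₁, hP₁⟩ := hP₁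
  obtain ⟨α₂, β₂, γ₂, hα₂, hβ₂, -, hs₂, hP₂⟩ := hP₂
  have hcol := affineIndependent_iff_not_collinear_set.1 hABC
  have hpowA := inner_mul_inner_div_norm_sq_eq_of_angle_eq
    (by rwa [Set.insert_comm] at hcol) hs₁ hP₁ hs₂ hP₂ hγ₁ hβ₂ hisoA
  have hP₁' : γ₁ • C + α₁ • A + β₁ • B = P₁ := by rw [← hP₁]; abel
  have hP₂' : γ₂ • C + α₂ • A + β₂ • B = P₂ := by rw [← hP₂]; abel
  have hpowC := inner_mul_inner_div_norm_sq_eq_of_angle_eq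
    (by rwa [Set.pair_comm] at hcol) (by linarith) hP₁' (by linarith) hP₂' hβ₁ hα₂ hisoC
  have hP' : P = midpoint ℝ P₂ P₁ := hP.trans (midpoint_comm _ _)
  have dA₁ := dist_sq_eq_of_mem_line_of_inner_eq_zero_left hP hA₁ hA₁perp
  have dA₂ := dist_sq_eq_of_mem_line_of_inner_eq_zero_left hP' hA₂ hA₂perp
  have dA₂' := dist_sq_eq_of_mem_line_of_inner_eq_zero_right hP' hA₂ hA₂perp
  have dB₁ := dist_sq_eq_of_mem_line_of_inner_eq_zero_left hP hB₁ hB₁perp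
  have dB₂ := dist_sq_eq_of_mem_line_of_inner_eq_zero_left hP' hB₂ hB₂perp
  have dB₂' := dist_sq_eq_of_mem_line_of_inner_eq_zero_right hP' hB₂ hB₂perp
  have dC₁ := dist_sq_eq_of_mem_line_of_inner_eq_zero_left hP hC₁ hC₁perp
  have dC₂ := dist_sq_eq_of_mem_line_of_inner_eq_zero_left hP' hC₂ hC₂perp
  refine ⟨?_, ?_, ?_, ?_, ?_⟩ <;> rw [← sq_eq_sq₀ dist_nonneg dist_nonneg]
  · rw [dA₁, dA₂]; ring
  · rw [dA₂', dB₁, hpowC]; ring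
  · rw [dB₁, dB₂]; ring
  · rw [dB₂', dC₁, hpowA]; ring
  · rw [dC₁, dC₂]; ring

/-- **The six-point circle of two isogonal conjugate points.** If `P₁`, `P₂` are isogonal
conjugate points in the interior of triangle `ABC`, and `A₁B₁C₁`, `A₂B₂C₂` are their pedal
triangles, then the six points `A₁, A₂, B₁, B₂, C₁, C₂` are equidistant from the midpoint
`P` of `P₁P₂`, hence concyclic. -/
theorem six_point_circle (A B C P₁ P₂ A₁ B₁ C₁ A₂ B₂ C₂ : EuclideanSpace ℝ (Fin 2))
    (hABC : AffineIndependent ℝ ![A, B, C])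
    (hP₁ : ∃ α β γ : ℝ, 0 < α ∧ 0 < β ∧ 0 < γ ∧ α + β + γ = 1 ∧ α • A + β • B + γ • C = P₁)
    (hP₂ : ∃ α β γ : ℝ, 0 < α ∧ 0 < β ∧ 0 < γ ∧ α + β + γ = 1 ∧ α • A + β • B + γ • C = P₂)
    (hisoA : ∠ B A P₁ = ∠ C A P₂) (hisoB : ∠ C B P₁ = ∠ A B P₂) (hisoC : ∠ A C P₁ = ∠ B C P₂)
    (hA₁ : A₁ ∈ line[ℝ, B, C]) (hA₁perp : ⟪P₁ - A₁, C - B⟫ = 0)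
    (hB₁ : B₁ ∈ line[ℝ, C, A]) (hB₁perp : ⟪P₁ - B₁, A - C⟫ = 0)
    (hC₁ : C₁ ∈ line[ℝ, A, B]) (hC₁perp : ⟪P₁ - C₁, B - A⟫ = 0)
    (hA₂ : A₂ ∈ line[ℝ, B, C]) (hA₂perp : ⟪P₂ - A₂, C - B⟫ = 0)
    (hB₂ : B₂ ∈ line[ℝ, C, A]) (hB₂perp : ⟪P₂ - B₂, A - C⟫ = 0)
    (hC₂ : C₂ ∈ line[ℝ, A, B]) (hC₂perp : ⟪P₂ - C₂, B - A⟫ = 0)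
    (P : EuclideanSpace ℝ (Fin 2)) (hP : P = midpoint ℝ P₁ P₂) :
    dist P A₁ = dist P A₂ ∧ dist P A₂ = dist P B₁ ∧ dist P B₁ = dist P B₂ ∧
      dist P B₂ = dist P C₁ ∧ dist P C₁ = dist P C₂ :=
  six_point_circle_general A B C P₁ P₂ A₁ B₁ C₁ A₂ B₂ C₂ hABC hP₁ hP₂ hisoA hisoC hA₁ hA₁perp hB₁
    hB₁perp hC₁ hC₁perp hA₂ hA₂perp hB₂ hB₂perp hC₂ hC₂perp P hP
end

section
/- The isotomic cevians of concurrent cevians are concurrent: Let A, B, C be affinely independent points in the Euclidean plane. Let A₁ be strictly between B and C, B₁ strictly between C and A, and C₁ strictly between A and B, and suppose the lines AA₁, BB₁, CC₁ have a common point. Let A₂ = B + C − A₁, B₂ = C + A − B₁, C₂ = A + B − C₁ (the reflections of A₁, B₁, C₁ in the midpoints of the respective sides). Then the lines AA₂, BB₂, CC₂ have a common point. -/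
/-! Write `A₁ = lineMap B C a`, `B₁ = lineMap C A b`, `C₁ = lineMap A B c`. By Ceva's theorem
the cevians through `A₁, B₁, C₁` are concurrent exactly when `a b c = (1 - a)(1 - b)(1 - c)`,
provided two of them are not parallel. Reflecting in the midpoints replaces `a, b, c` by
`1 - a, 1 - b, 1 - c`, which merely swaps the two sides of Ceva's condition. -/

open AffineMap

section Ceva

variable {k V : Type*} [Field k] [AddCommGroup V] [Module k V]

theorem AffineIndependent.eq_zero_of_smul_sub_add_smul_sub_eq_zero {A B C : V}
    (h : AffineIndependent k ![A, B, C]) {s t : k} (hst : s • (B - A) + t • (C - A) = 0) :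
    s = 0 ∧ t = 0 := by
  have hw := affineIndependent_iff.mp h Finset.univ ![-s - t, s, t]
    (by simp [Fin.sum_univ_three]; ring) (by
      simp only [Fin.sum_univ_three, Matrix.cons_val_zero, Matrix.cons_val_one,
        Matrix.cons_val_two, Matrix.head_cons, Matrix.tail_cons]
      linear_combination (norm := module) hst)
  exact ⟨by simpa using hw 1 (by simp), by simpa using hw 2 (by simp)⟩

theorem ceva_of_concurrent {A B C : V} (h : AffineIndependent k ![A, B, C]) {a b c : k}
    (hconc : ∃ P, P ∈ line[k, A, lineMap B C a] ∧ P ∈ line[k, B, lineMap C A b] ∧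
      P ∈ line[k, C, lineMap A B c]) :
    a * b * c = (1 - a) * (1 - b) * (1 - c) := by
  obtain ⟨P, hPA, hPB, hPC⟩ := hconc
  obtain ⟨u, rfl⟩ := mem_affineSpan_pair_iff_exists_lineMap_eq.mp hPA
  obtain ⟨v, hv⟩ := mem_affineSpan_pair_iff_exists_lineMap_eq.mp hPB
  obtain ⟨w, hw⟩ := mem_affineSpan_pair_iff_exists_lineMap_eq.mp hPC
  simp only [lineMap_apply_module] at hv hw
  -- compare the coordinates of `P` in the frame `A, B, C` along each pair of cevians
  obtain ⟨hvB, hvC⟩ := h.eq_zero_of_smul_sub_add_smul_sub_eq_zero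
    (s := u * (1 - a) - 1 + v) (t := u * a - v * (1 - b))
    (by linear_combination (norm := module) -hv)
  obtain ⟨hwB, hwC⟩ := h.eq_zero_of_smul_sub_add_smul_sub_eq_zero
    (s := u * (1 - a) - w * c) (t := u * a + w - 1)
    (by linear_combination (norm := module) -hw)
  have hu₁ : u * (a + (1 - a) * (1 - b)) = 1 - b := by linear_combination hvC + (1 - b) * hvB
  have hu₂ : u * (1 - a + a * c) = c := by linear_combination hwB + c * hwC
  linear_combination (1 - a + a * c) * hu₁ - (a + (1 - a) * (1 - b)) * hu₂

theorem exists_mem_cevians_of_ceva (A B C : V) {a b c : k}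
    (hceva : a * b * c = (1 - a) * (1 - b) * (1 - c)) (hne : 1 - b + a * b ≠ 0) :
    ∃ Q, Q ∈ line[k, A, lineMap B C a] ∧ Q ∈ line[k, B, lineMap C A b] ∧
      Q ∈ line[k, C, lineMap A B c] := by
  -- `Q` has barycentric coordinates `(a b, (1 - a)(1 - b), a (1 - b)) / s` in the frame `A, B, C`
  generalize hs : 1 - b + a * b = s at hne
  refine ⟨lineMap A (lineMap B C a) ((1 - b) / s), lineMap_mem_affineSpan_pair _ _ _, ?_, ?_⟩
  · convert lineMap_mem_affineSpan_pair (a / s) B (lineMap C A b) using 1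
    simp only [lineMap_apply_module]
    match_scalars
    · field_simp; linear_combination -hs
    · field_simp; linear_combination hs
    · ring
  · convert lineMap_mem_affineSpan_pair ((a * b + (1 - a) * (1 - b)) / s) C (lineMap A B c) using 1
    simp only [lineMap_apply_module]
    match_scalars
    · field_simp; linear_combination hceva - hs
    · field_simp; linear_combination -hceva
    · field_simp; linear_combination hs

theorem add_sub_lineMap_eq_lineMap_one_sub (B C : V) (a : k) :
    B + C - lineMap B C a = lineMap B C (1 - a) := by
  simp only [lineMap_apply_module]
  module

end Ceva

/-- **Isotomic cevians of concurrent cevians are concurrent.** If the cevians `AA₁`, `BB₁`,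
`CC₁` of triangle `ABC` are concurrent and `A₂ = B + C − A₁`, `B₂ = C + A − B₁`,
`C₂ = A + B − C₁` are the reflections of `A₁`, `B₁`, `C₁` in the midpoints of the
respective sides, then the cevians `AA₂`, `BB₂`, `CC₂` are also concurrent. -/
theorem isotomic_cevians_concurrent (A B C A₁ B₁ C₁ : EuclideanSpace ℝ (Fin 2))
    (hABC : AffineIndependent ℝ ![A, B, C])
    (hA₁ : Sbtw ℝ B A₁ C) (hB₁ : Sbtw ℝ C B₁ A) (hC₁ : Sbtw ℝ A C₁ B)
    (hconc : ∃ P, P ∈ line[ℝ, A, A₁] ∧ P ∈ line[ℝ, B, B₁] ∧ P ∈ line[ℝ, C, C₁]) :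
    ∃ Q, Q ∈ line[ℝ, A, B + C - A₁] ∧ Q ∈ line[ℝ, B, C + A - B₁] ∧
      Q ∈ line[ℝ, C, A + B - C₁] := by
  obtain ⟨a, ⟨-, ha₁⟩, rfl⟩ := hA₁.mem_image_Ioo
  obtain ⟨b, ⟨hb₀, hb₁⟩, rfl⟩ := hB₁.mem_image_Ioo
  obtain ⟨c, -, rfl⟩ := hC₁.mem_image_Ioo
  have hceva := ceva_of_concurrent hABC hconc
  simp only [add_sub_lineMap_eq_lineMap_one_sub]
  refine exists_mem_cevians_of_ceva A B C (by linear_combination -hceva) (ne_of_gt ?_)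
  linarith [mul_pos (sub_pos.2 ha₁) (sub_pos.2 hb₁)]
end

section
/- The touch points of the inscribed circle and of the exinscribed circle on a side are isotomic: Let A, B, C be affinely independent points in the Euclidean plane. Let O be a point and D, E, F points with D strictly between B and C, E strictly between C and A, F strictly between A and B, dist O D = dist O E = dist O F, and O − D orthogonal to C − B, O − E orthogonal to A − C, O − F orthogonal to B − A (so D is the touch point of the inscribed circle on BC). Let O' be a point and D', E', F' points with D' strictly between B and C, C strictly between A and E', B strictly between A and F', dist O' D' = dist O' E' = dist O' F', and O' − D' orthogonal to C − B, O' − E' orthogonal to A − C, O' − F' orthogonal to B − A (so D' is the touch point of the exinscribed circle opposite A on BC). Then the midpoint of the segment DD' equals the midpoint of the segment BC, i.e., D and D' are symmetric with respect to the midpoint of BC. -/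
/-!
Both circles are tangent to all three side lines, and the two tangent segments from a point to a
circle have equal length (Pythagoras). For the incircle this gives `BD = s - b` with `s` the
semiperimeter; for the excircle opposite `A` the tangent lengths from `A` agree,
`b + CD' = c + BD'`, and with `BD' + CD' = a` this gives `CD' = s - b` as well. So `BD = CD'`.
-/

open RealInnerProductSpace

section Tangents

variable {V : Type*} [NormedAddCommGroup V] [InnerProductSpace ℝ V]

theorem inner_sub_eq_zero_of_mem_affineSpan_pair {w B C X Y : V} (h : ⟪w, C - B⟫ = 0)
    (hX : X ∈ line[ℝ, B, C]) (hY : Y ∈ line[ℝ, B, C]) : ⟪w, X - Y⟫ = 0 := by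
  have hXY : X -ᵥ Y ∈ ℝ ∙ (C -ᵥ B) := by
    rw [← vectorSpan_pair_rev, ← direction_affineSpan]
    exact AffineSubspace.vsub_mem_direction hX hY
  obtain ⟨r, hr⟩ := Submodule.mem_span_singleton.1 hXY
  rw [← vsub_eq_sub, ← hr, vsub_eq_sub, inner_smul_right, h, mul_zero]

theorem dist_eq_dist_of_inner_sub_eq_zero {O X T₁ T₂ : V} (h₁ : ⟪O - T₁, X - T₁⟫ = 0)
    (h₂ : ⟪O - T₂, X - T₂⟫ = 0) (hr : dist O T₁ = dist O T₂) : dist X T₁ = dist X T₂ := by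
  have pythagoras {T : V} (h : ⟪O - T, X - T⟫ = 0) :
      dist X O ^ 2 = dist X T ^ 2 + dist O T ^ 2 := by
    rw [real_inner_comm] at h
    simpa only [dist_eq_norm, sub_sub_sub_cancel_right, ← sq] using
      norm_sub_sq_eq_norm_sq_add_norm_sq_real h
  have hsq : dist X T₁ ^ 2 = dist X T₂ ^ 2 := by
    linarith [hr ▸ pythagoras h₁, pythagoras h₂]
  exact (pow_left_inj₀ dist_nonneg dist_nonneg two_ne_zero).1 hsq

theorem dist_eq_dist_of_tangent_sides {A B C O D E F : V} (hD : D ∈ line[ℝ, B, C])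
    (hE : E ∈ line[ℝ, C, A]) (hF : F ∈ line[ℝ, A, B])
    (hrDE : dist O D = dist O E) (hrEF : dist O E = dist O F)
    (hDperp : ⟪O - D, C - B⟫ = 0) (hEperp : ⟪O - E, A - C⟫ = 0) (hFperp : ⟪O - F, B - A⟫ = 0) :
    dist B D = dist B F ∧ dist C D = dist C E ∧ dist A E = dist A F := by
  have hBD := inner_sub_eq_zero_of_mem_affineSpan_pair hDperp (left_mem_affineSpan_pair ..) hD
  have hCD := inner_sub_eq_zero_of_mem_affineSpan_pair hDperp (right_mem_affineSpan_pair ..) hD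
  have hCE := inner_sub_eq_zero_of_mem_affineSpan_pair hEperp (left_mem_affineSpan_pair ..) hE
  have hAE := inner_sub_eq_zero_of_mem_affineSpan_pair hEperp (right_mem_affineSpan_pair ..) hE
  have hAF := inner_sub_eq_zero_of_mem_affineSpan_pair hFperp (left_mem_affineSpan_pair ..) hF
  have hBF := inner_sub_eq_zero_of_mem_affineSpan_pair hFperp (right_mem_affineSpan_pair ..) hF
  exact ⟨dist_eq_dist_of_inner_sub_eq_zero hBD hBF (hrDE.trans hrEF),
    dist_eq_dist_of_inner_sub_eq_zero hCD hCE hrDE, dist_eq_dist_of_inner_sub_eq_zero hAE hAF hrEF⟩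

end Tangents

theorem Sbtw.right_mem_affineSpan_pair {V P : Type*} [AddCommGroup V] [Module ℝ V]
    [AddTorsor V P] {x y z : P} (h : Sbtw ℝ x y z) : z ∈ line[ℝ, x, y] :=
  h.wbtw.collinear.mem_affineSpan_of_mem_of_ne (by simp) (by simp) (by simp) h.left_ne

theorem midpoint_eq_midpoint_of_wbtw_of_dist_eq {V : Type*} [NormedAddCommGroup V]
    [NormedSpace ℝ V] {B C D D' : V} (hD : Wbtw ℝ B D C) (hD' : Wbtw ℝ B D' C)
    (h : dist B D = dist C D') : midpoint ℝ D D' = midpoint ℝ B C := by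
  obtain ⟨t, ⟨ht0, -⟩, rfl⟩ := hD
  obtain ⟨t', ⟨-, ht'1⟩, rfl⟩ := hD'
  rcases eq_or_ne B C with rfl | hBC
  · simp
  rw [dist_left_lineMap, dist_right_lineMap, Real.norm_of_nonneg ht0,
    Real.norm_of_nonneg (sub_nonneg.2 ht'1)] at h
  obtain rfl : t = 1 - t' := mul_right_cancel₀ (dist_ne_zero.2 hBC) h
  simp only [midpoint_eq_smul_add, AffineMap.lineMap_apply_module]
  module

theorem incircle_excircle_touch_points_isotomic_general
    (A B C O D E F O' D' E' F' : EuclideanSpace ℝ (Fin 2))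
    (hD : Sbtw ℝ B D C) (hE : Sbtw ℝ C E A) (hF : Sbtw ℝ A F B)
    (hrDE : dist O D = dist O E) (hrEF : dist O E = dist O F)
    (hDperp : ⟪O - D, C - B⟫ = 0) (hEperp : ⟪O - E, A - C⟫ = 0) (hFperp : ⟪O - F, B - A⟫ = 0)
    (hD' : Sbtw ℝ B D' C) (hE' : Sbtw ℝ A C E') (hF' : Sbtw ℝ A B F')
    (hrDE' : dist O' D' = dist O' E') (hrEF' : dist O' E' = dist O' F')
    (hD'perp : ⟪O' - D', C - B⟫ = 0) (hE'perp : ⟪O' - E', A - C⟫ = 0)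
    (hF'perp : ⟪O' - F', B - A⟫ = 0) :
    midpoint ℝ D D' = midpoint ℝ B C := by
  obtain ⟨hBDF, hCDE, hAEF⟩ := dist_eq_dist_of_tangent_sides hD.wbtw.mem_affineSpan
    hE.wbtw.mem_affineSpan hF.wbtw.mem_affineSpan hrDE hrEF hDperp hEperp hFperp
  have hE'CA : E' ∈ line[ℝ, C, A] := by
    rw [AffineSubspace.affineSpan_pair_comm]
    exact hE'.right_mem_affineSpan_pair
  obtain ⟨hBDF', hCDE', hAEF'⟩ := dist_eq_dist_of_tangent_sides hD'.wbtw.mem_affineSpan hE'CA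
    hF'.right_mem_affineSpan_pair hrDE' hrEF' hD'perp hE'perp hF'perp
  have hBC := dist_add_dist_eq_iff.2 hD.wbtw
  have hCA := dist_add_dist_eq_iff.2 hE.wbtw
  have hAB := dist_add_dist_eq_iff.2 hF.wbtw
  have hBC' := dist_add_dist_eq_iff.2 hD'.wbtw
  have hAE' := dist_add_dist_eq_iff.2 hE'.wbtw
  have hAF' := dist_add_dist_eq_iff.2 hF'.wbtw
  refine midpoint_eq_midpoint_of_wbtw_of_dist_eq hD.wbtw hD'.wbtw ?_
  linarith [dist_comm D C, dist_comm E A, dist_comm F B, dist_comm D' C, dist_comm C A]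

/-- **The touch points of the incircle and the excircle on a side are isotomic.** If the
inscribed circle (center `O`) touches `BC` at `D` and the exinscribed circle opposite `A`
(center `O'`) touches `BC` at `D'`, then `D` and `D'` are symmetric with respect to the
midpoint of `BC`. -/
theorem incircle_excircle_touch_points_isotomic
    (A B C O D E F O' D' E' F' : EuclideanSpace ℝ (Fin 2))
    (hABC : AffineIndependent ℝ ![A, B, C])
    (hD : Sbtw ℝ B D C) (hE : Sbtw ℝ C E A) (hF : Sbtw ℝ A F B)
    (hrDE : dist O D = dist O E) (hrEF : dist O E = dist O F)
    (hDperp : ⟪O - D, C - B⟫ = 0) (hEperp : ⟪O - E, A - C⟫ = 0) (hFperp : ⟪O - F, B - A⟫ = 0)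
    (hD' : Sbtw ℝ B D' C) (hE' : Sbtw ℝ A C E') (hF' : Sbtw ℝ A B F')
    (hrDE' : dist O' D' = dist O' E') (hrEF' : dist O' E' = dist O' F')
    (hD'perp : ⟪O' - D', C - B⟫ = 0) (hE'perp : ⟪O' - E', A - C⟫ = 0)
    (hF'perp : ⟪O' - F', B - A⟫ = 0) :
    midpoint ℝ D D' = midpoint ℝ B C :=
  incircle_excircle_touch_points_isotomic_general A B C O D E F O' D' E' F' hD hE hF hrDE hrEF
    hDperp hEperp hFperp hD' hE' hF' hrDE' hrEF' hD'perp hE'perp hF'perp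
end

section
/- Existence of the Nagel point: Let A, B, C be affinely independent points in the Euclidean plane, set a = dist B C, b = dist C A, c = dist A B and p = (a + b + c)/2. Let A₁ be the point strictly between B and C with dist B A₁ = p − c, let B₁ be the point strictly between C and A with dist C B₁ = p − a, and let C₁ be the point strictly between A and B with dist A C₁ = p − b (the touch points of the three exinscribed circles with the sides, i.e., the vertices of the cotangent triangle). Then the lines AA₁, BB₁, CC₁ have a common point. -/
/-!
The weights `p - a`, `p - b`, `p - c` satisfy `(p - b) + (p - c) = a` and its cyclic analogues,
so `A₁` divides `BC` in the ratio `(p - c) : (p - b)`, and similarly for `B₁`, `C₁`. Hence each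
line `AA₁`, `BB₁`, `CC₁` is a cevian through the point with barycentric coordinates
`(p - a : p - b : p - c)`, which is therefore common to all three.
-/

open AffineMap

theorem Wbtw.eq_lineMap_dist_div {V P : Type*} [NormedAddCommGroup V] [NormedSpace ℝ V]
    [MetricSpace P] [NormedAddTorsor V P] {x y z : P} (h : Wbtw ℝ x y z) :
    y = lineMap x z (dist x y / dist x z) := by
  obtain ⟨t, ⟨ht₀, -⟩, rfl⟩ := h
  rcases eq_or_ne x z with rfl | hxz
  · simp
  · rw [dist_comm x, dist_lineMap_left, Real.norm_eq_abs, abs_of_nonneg ht₀,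
      mul_div_cancel_right₀ _ (dist_ne_zero.2 hxz)]

section Barycentric

variable {k V : Type*} [Field k] [AddCommGroup V] [Module k V]

def baryPoint (A B C : V) (wA wB wC : k) : V :=
  (wA + wB + wC)⁻¹ • (wA • A + wB • B + wC • C)

theorem baryPoint_rotate (A B C : V) (wA wB wC : k) :
    baryPoint A B C wA wB wC = baryPoint B C A wB wC wA := by
  unfold baryPoint
  rw [add_rotate wA, add_rotate (wA • A)]

theorem baryPoint_eq_lineMap (A B C : V) {wA wB wC : k} (hBC : wB + wC ≠ 0)
    (hABC : wA + wB + wC ≠ 0) :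
    baryPoint A B C wA wB wC =
      lineMap A (lineMap B C (wC / (wB + wC))) ((wB + wC) / (wA + wB + wC)) := by
  simp only [baryPoint, lineMap_apply_module]
  match_scalars <;> field_simp <;> ring

theorem baryPoint_mem_line (A B C : V) {wA wB wC : k} (hBC : wB + wC ≠ 0)
    (hABC : wA + wB + wC ≠ 0) :
    baryPoint A B C wA wB wC ∈ line[k, A, lineMap B C (wC / (wB + wC))] := by
  rw [baryPoint_eq_lineMap A B C hBC hABC]
  exact lineMap_mem_affineSpan_pair _ _ _

theorem exists_mem_lines_vertex_lineMap (A B C : V) {wA wB wC : k} (hA : wB + wC ≠ 0)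
    (hB : wC + wA ≠ 0) (hC : wA + wB ≠ 0) (hABC : wA + wB + wC ≠ 0) :
    ∃ N, N ∈ line[k, A, lineMap B C (wC / (wB + wC))] ∧
      N ∈ line[k, B, lineMap C A (wA / (wC + wA))] ∧
      N ∈ line[k, C, lineMap A B (wB / (wA + wB))] := by
  have hBCA : wB + wC + wA ≠ 0 := by rwa [add_rotate] at hABC
  have hCAB : wC + wA + wB ≠ 0 := by rwa [add_rotate, add_rotate] at hABC
  refine ⟨baryPoint A B C wA wB wC, baryPoint_mem_line A B C hA hABC, ?_, ?_⟩
  · rw [baryPoint_rotate]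
    exact baryPoint_mem_line B C A hB hBCA
  · rw [baryPoint_rotate, baryPoint_rotate]
    exact baryPoint_mem_line C A B hC hCAB

end Barycentric

theorem nagel_point_general (A B C A₁ B₁ C₁ : EuclideanSpace ℝ (Fin 2)) (a b c p : ℝ)
    (ha : a = dist B C) (hb : b = dist C A) (hc : c = dist A B) (hp : p = (a + b + c) / 2)
    (hA₁ : Sbtw ℝ B A₁ C) (hA₁d : dist B A₁ = p - c)
    (hB₁ : Sbtw ℝ C B₁ A) (hB₁d : dist C B₁ = p - a)
    (hC₁ : Sbtw ℝ A C₁ B) (hC₁d : dist A C₁ = p - b) :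
    ∃ N, N ∈ line[ℝ, A, A₁] ∧ N ∈ line[ℝ, B, B₁] ∧ N ∈ line[ℝ, C, C₁] := by
  have ha' : (p - b) + (p - c) = a := by linarith
  have hb' : (p - c) + (p - a) = b := by linarith
  have hc' : (p - a) + (p - b) = c := by linarith
  have hA₁eq : A₁ = lineMap B C ((p - c) / ((p - b) + (p - c))) := by
    rw [ha', ← hA₁d, ha, ← hA₁.wbtw.eq_lineMap_dist_div]
  have hB₁eq : B₁ = lineMap C A ((p - a) / ((p - c) + (p - a))) := by
    rw [hb', ← hB₁d, hb, ← hB₁.wbtw.eq_lineMap_dist_div]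
  have hC₁eq : C₁ = lineMap A B ((p - b) / ((p - a) + (p - b))) := by
    rw [hc', ← hC₁d, hc, ← hC₁.wbtw.eq_lineMap_dist_div]
  have ha₀ : 0 < a := ha ▸ dist_pos.2 hA₁.left_ne_right
  have hb₀ : 0 < b := hb ▸ dist_pos.2 hB₁.left_ne_right
  have hc₀ : 0 < c := hc ▸ dist_pos.2 hC₁.left_ne_right
  rw [hA₁eq, hB₁eq, hC₁eq]
  exact exists_mem_lines_vertex_lineMap A B C (by linarith) (by linarith) (by linarith)
    (by linarith)

/-- **Existence of the Nagel point.** If `A₁`, `B₁`, `C₁` are the touch points of the three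
exinscribed circles with the sides `BC`, `CA`, `AB` of triangle `ABC` (so
`dist B A₁ = p − c`, `dist C B₁ = p − a`, `dist A C₁ = p − b`), then the lines `AA₁`,
`BB₁`, `CC₁` are concurrent. -/
theorem nagel_point (A B C A₁ B₁ C₁ : EuclideanSpace ℝ (Fin 2)) (a b c p : ℝ)
    (hABC : AffineIndependent ℝ ![A, B, C])
    (ha : a = dist B C) (hb : b = dist C A) (hc : c = dist A B) (hp : p = (a + b + c) / 2)
    (hA₁ : Sbtw ℝ B A₁ C) (hA₁d : dist B A₁ = p - c)
    (hB₁ : Sbtw ℝ C B₁ A) (hB₁d : dist C B₁ = p - a)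
    (hC₁ : Sbtw ℝ A C₁ B) (hC₁d : dist A C₁ = p - b) :
    ∃ N, N ∈ line[ℝ, A, A₁] ∧ N ∈ line[ℝ, B, B₁] ∧ N ∈ line[ℝ, C, C₁] :=
  nagel_point_general A B C A₁ B₁ C₁ a b c p ha hb hc hp hA₁ hA₁d hB₁ hB₁d hC₁ hC₁d
end

section
/- Existence of the Gergonne point: Let A, B, C be affinely independent points in the Euclidean plane, set a = dist B C, b = dist C A, c = dist A B and p = (a + b + c)/2. Let A₁ be the point strictly between B and C with dist B A₁ = p − b, let B₁ be the point strictly between C and A with dist C B₁ = p − c, and let C₁ be the point strictly between A and B with dist A C₁ = p − a (the touch points of the inscribed circle with the sides, i.e., the vertices of the contact triangle). Then the lines AA₁, BB₁, CC₁ have a common point. -/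
/-!
Write `x = p - a`, `y = p - b`, `z = p - c`; these are positive and `a = y + z`, `b = z + x`,
`c = x + y`. The touch point on `BC` divides it in the ratio `y : z`, so it is the foot of the
cevian of the point with barycentric coordinates `(1/x : 1/y : 1/z)`, and likewise on the other
two sides. That point therefore lies on all three cevians (the converse of Ceva's theorem).
-/

open AffineMap

section Cevians

variable {k V : Type*} [Field k] [AddCommGroup V] [Module k V]

theorem inv_smul_add_mem_line_lineMap (A B C : V) {α β γ : k} (hβγ : β + γ ≠ 0)
    (hαβγ : α + β + γ ≠ 0) :
    (α + β + γ)⁻¹ • (α • A + β • B + γ • C) ∈ line[k, A, lineMap B C (γ / (β + γ))] := by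
  have : (α + β + γ)⁻¹ • (α • A + β • B + γ • C) =
      lineMap A (lineMap B C (γ / (β + γ))) ((β + γ) / (α + β + γ)) := by
    simp only [lineMap_apply, vsub_eq_sub, vadd_eq_add]
    match_scalars <;> field_simp <;> ring
  rw [this]
  exact lineMap_mem_affineSpan_pair _ _ _

/-- The converse of Ceva's theorem, with the cevian feet given by the weights `α`, `β`, `γ`. -/
theorem inv_smul_add_mem_cevians (A B C : V) {α β γ : k} (hβγ : β + γ ≠ 0)
    (hγα : γ + α ≠ 0) (hαβ : α + β ≠ 0) (hαβγ : α + β + γ ≠ 0) :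
    let G := (α + β + γ)⁻¹ • (α • A + β • B + γ • C)
    G ∈ line[k, A, lineMap B C (γ / (β + γ))] ∧
      G ∈ line[k, B, lineMap C A (α / (γ + α))] ∧
      G ∈ line[k, C, lineMap A B (β / (α + β))] := by
  have rot₁ : α + β + γ = β + γ + α := by ring
  have rot₂ : α + β + γ = γ + α + β := by ring
  refine ⟨inv_smul_add_mem_line_lineMap A B C hβγ hαβγ, ?_, ?_⟩
  · have hG : α • A + β • B + γ • C = β • B + γ • C + α • A := by abel
    rw [hG, rot₁]
    exact inv_smul_add_mem_line_lineMap B C A hγα (rot₁ ▸ hαβγ)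
  · have hG : α • A + β • B + γ • C = γ • C + α • A + β • B := by abel
    rw [hG, rot₂]
    exact inv_smul_add_mem_line_lineMap C A B hαβ (rot₂ ▸ hαβγ)

end Cevians

theorem Wbtw.eq_lineMap_of_dist {V P : Type*} [NormedAddCommGroup V] [NormedSpace ℝ V]
    [MetricSpace P] [NormedAddTorsor V P] {B X C : P} {u v : ℝ} (h : Wbtw ℝ B X C)
    (hX : dist B X = u) (hBC : dist B C = u + v) (huv : u + v ≠ 0) :
    X = lineMap B C (u / (u + v)) := by
  obtain ⟨t, ⟨ht, -⟩, rfl⟩ := h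
  rw [dist_left_lineMap, hBC, Real.norm_eq_abs, abs_of_nonneg ht] at hX
  congr 1
  field_simp
  linarith

theorem inv_div_inv_add_inv {K : Type*} [Field K] {y z : K} (hy : y ≠ 0) (hz : z ≠ 0) :
    z⁻¹ / (y⁻¹ + z⁻¹) = y / (y + z) := by
  rw [inv_add_inv hy hz, div_div_eq_mul_div, inv_mul_eq_div, mul_div_cancel_right₀ _ hz]

theorem gergonne_point_general (A B C A₁ B₁ C₁ : EuclideanSpace ℝ (Fin 2)) (a b c p : ℝ)
    (ha : a = dist B C) (hb : b = dist C A) (hc : c = dist A B) (hp : p = (a + b + c) / 2)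
    (hA₁ : Sbtw ℝ B A₁ C) (hA₁d : dist B A₁ = p - b)
    (hB₁ : Sbtw ℝ C B₁ A) (hB₁d : dist C B₁ = p - c)
    (hC₁ : Sbtw ℝ A C₁ B) (hC₁d : dist A C₁ = p - a) :
    ∃ G, G ∈ line[ℝ, A, A₁] ∧ G ∈ line[ℝ, B, B₁] ∧ G ∈ line[ℝ, C, C₁] := by
  set x := p - a
  set y := p - b
  set z := p - c
  have hx : 0 < x := hC₁d ▸ dist_pos.2 hC₁.left_ne
  have hy : 0 < y := hA₁d ▸ dist_pos.2 hA₁.left_ne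
  have hz : 0 < z := hB₁d ▸ dist_pos.2 hB₁.left_ne
  have hA₁' : A₁ = lineMap B C (z⁻¹ / (y⁻¹ + z⁻¹)) := by
    rw [inv_div_inv_add_inv hy.ne' hz.ne']
    exact hA₁.wbtw.eq_lineMap_of_dist hA₁d (by linarith) (by positivity)
  have hB₁' : B₁ = lineMap C A (x⁻¹ / (z⁻¹ + x⁻¹)) := by
    rw [inv_div_inv_add_inv hz.ne' hx.ne']
    exact hB₁.wbtw.eq_lineMap_of_dist hB₁d (by linarith) (by positivity)
  have hC₁' : C₁ = lineMap A B (y⁻¹ / (x⁻¹ + y⁻¹)) := by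
    rw [inv_div_inv_add_inv hx.ne' hy.ne']
    exact hC₁.wbtw.eq_lineMap_of_dist hC₁d (by linarith) (by positivity)
  rw [hA₁', hB₁', hC₁']
  exact ⟨_, inv_smul_add_mem_cevians A B C (by positivity) (by positivity) (by positivity)
    (by positivity)⟩

/-- **Existence of the Gergonne point.** If `A₁`, `B₁`, `C₁` are the touch points of the
inscribed circle with the sides `BC`, `CA`, `AB` of triangle `ABC` (so
`dist B A₁ = p − b`, `dist C B₁ = p − c`, `dist A C₁ = p − a`), then the lines `AA₁`,
`BB₁`, `CC₁` are concurrent. -/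
theorem gergonne_point (A B C A₁ B₁ C₁ : EuclideanSpace ℝ (Fin 2)) (a b c p : ℝ)
    (hABC : AffineIndependent ℝ ![A, B, C])
    (ha : a = dist B C) (hb : b = dist C A) (hc : c = dist A B) (hp : p = (a + b + c) / 2)
    (hA₁ : Sbtw ℝ B A₁ C) (hA₁d : dist B A₁ = p - b)
    (hB₁ : Sbtw ℝ C B₁ A) (hB₁d : dist C B₁ = p - c)
    (hC₁ : Sbtw ℝ A C₁ B) (hC₁d : dist A C₁ = p - a) :
    ∃ G, G ∈ line[ℝ, A, A₁] ∧ G ∈ line[ℝ, B, B₁] ∧ G ∈ line[ℝ, C, C₁] :=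
  gergonne_point_general A B C A₁ B₁ C₁ a b c p ha hb hc hp hA₁ hA₁d hB₁ hB₁d hC₁ hC₁d
end
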